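/- arXiv:1911.01386 — 6 statements merged into one kernel-verified Lean document; each statement's English description precedes it below -/
import Mathlib

section
/- For all natural numbers k and n and every complex number x, the k-th derivative of the function z ↦ (sin z)^n, evaluated at x, equals ((-1)^n / 2^n) · Σ_{r=0}^{n} (-1)^r · C(n,r) · (2r − n)^k · i^(k−n) · exp(i·(2r − n)·x), where C(n,r) is the binomial coefficient and i^(k−n) is the integer power of the imaginary unit. -/
open Complex Finset

/-! Binomially expanding `sin z = (-1 / (2i)) (-e^{iz} + e^{-iz})` writes `sin z ^ n` as a finite
combination of the exponentials `e^{i(2r - n)z}`, and the `k`-th derivative multiplies each of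
them by `(i(2r - n))^k`. -/

theorem iteratedDeriv_sum_mul_cexp {ι : Type*} (s : Finset ι) (c a : ι → ℂ) (k : ℕ) (x : ℂ) :
    iteratedDeriv k (fun z => ∑ i ∈ s, c i * exp (a i * z)) x =
      ∑ i ∈ s, c i * a i ^ k * exp (a i * x) := by
  rw [iteratedDeriv_fun_sum fun i _ => by fun_prop]
  simp only [iteratedDeriv_const_mul_field, iteratedDeriv_cexp_const_mul, mul_assoc]

theorem cexp_I_mul_pow_mul_cexp_neg_I_mul_pow {m n : ℕ} (h : m ≤ n) (z : ℂ) :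
    exp (I * z) ^ m * exp (-(I * z)) ^ (n - m) = exp (I * (2 * m - n) * z) := by
  rw [← exp_nat_mul, ← exp_nat_mul, ← exp_add, Nat.cast_sub h]
  ring_nf

theorem sin_pow_eq_sum_cexp (n : ℕ) (z : ℂ) :
    sin z ^ n = (-1 / (2 * I)) ^ n *
      ∑ r ∈ range (n + 1), (-1) ^ r * n.choose r * exp (I * (2 * r - n) * z) := by
  have hsin : sin z = -1 / (2 * I) * (-exp (I * z) + exp (-(I * z))) := by
    rw [sin, neg_mul, mul_comm z I]
    field_simp
    linear_combination (exp (-(I * z)) - exp (I * z)) * I_sq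
  rw [hsin, mul_pow, add_pow]
  refine congrArg _ (sum_congr rfl fun r hr => ?_)
  rw [neg_pow, mul_assoc _ (exp _ ^ r),
    cexp_I_mul_pow_mul_cexp_neg_I_mul_pow (mem_range_succ_iff.mp hr)]
  ring

theorem iteratedDeriv_sin_pow (k n : ℕ) (x : ℂ) :
    iteratedDeriv k (fun z : ℂ => Complex.sin z ^ n) x =
      ((-1 : ℂ) ^ n / 2 ^ n) *
        ∑ r ∈ Finset.range (n + 1),
          (-1 : ℂ) ^ r * (n.choose r : ℂ) * (2 * (r : ℂ) - (n : ℂ)) ^ k *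
            Complex.I ^ ((k : ℤ) - (n : ℤ)) *
            Complex.exp (Complex.I * (2 * (r : ℂ) - (n : ℂ)) * x) := by
  simp_rw [sin_pow_eq_sum_cexp n, iteratedDeriv_const_mul_field, iteratedDeriv_sum_mul_cexp,
    mul_sum]
  refine sum_congr rfl fun r _ => ?_
  rw [zpow_sub₀ I_ne_zero, zpow_natCast, zpow_natCast, mul_pow, div_pow, mul_pow]
  ring
end

section
/- For all natural numbers k and n and every real number x, the k-th derivative of the function t ↦ (sin t)^n, evaluated at x, equals ((-1)^n / 2^n) · Σ_{r=0}^{n} (-1)^r · C(n,r) · (2r − n)^k · cos((k − n)·π/2 + (2r − n)·x), where C(n,r) is the binomial coefficient. -/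
/-!
Binomially expanding `sin x = (I / 2) * (e^{-ix} - e^{ix})` gives
`sin x ^ n = (I / 2) ^ n * ∑ r, (-1) ^ r * C(n, r) * e^{i(2r - n)x}`. Taking real parts rewrites
this as a combination of the cosines `cos (-n π / 2 + (2r - n) x)`, and differentiating
`cos (a + b x)` multiplies it by `b` and shifts its phase by `π / 2`.
-/

open Real Finset

theorem Complex.sin_pow_eq_sum_exp (n : ℕ) (z : ℂ) :
    Complex.sin z ^ n = (I / 2) ^ n *
      ∑ r ∈ range (n + 1), (-1) ^ r * (n.choose r : ℂ) * Complex.exp ((2 * r - n) * z * I) := by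
  have hsin : Complex.sin z = I / 2 * (-Complex.exp (z * I) + Complex.exp (-z * I)) := by
    rw [Complex.sin]; ring
  rw [hsin, mul_pow, add_pow]
  congr 1
  refine sum_congr rfl fun r hr => ?_
  have hexp : Complex.exp (r * (z * I)) * Complex.exp ((n - r : ℕ) * (-z * I)) =
      Complex.exp ((2 * r - n) * z * I) := by
    rw [← Complex.exp_add, Nat.cast_sub (Nat.lt_succ_iff.mp (mem_range.mp hr))]
    ring_nf
  rw [neg_pow, ← Complex.exp_nat_mul, ← Complex.exp_nat_mul]
  linear_combination (-1) ^ r * (n.choose r : ℂ) * hexp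

theorem Real.sin_pow_eq_sum_cos (n : ℕ) (x : ℝ) :
    sin x ^ n = ∑ r ∈ range (n + 1), (-1) ^ n / 2 ^ n * ((-1) ^ r * (n.choose r : ℝ)) *
      cos (-(n * (π / 2)) + (2 * r - n) * x) := by
  have hrot : Complex.exp (-(n * (π / 2)) * Complex.I) = (-1) ^ n * Complex.I ^ n := by
    rw [show -(n * (π / 2) : ℂ) * Complex.I = n * -(π / 2 * Complex.I) by ring,
      Complex.exp_nat_mul, Complex.exp_neg, Complex.exp_pi_div_two_mul_I, Complex.inv_I, neg_pow]
  have hsign : (-1 : ℂ) ^ n * (-1) ^ n = 1 := by rw [← mul_pow]; norm_num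
  have hC := congrArg Complex.re (Complex.sin_pow_eq_sum_exp n x)
  rw [← Complex.ofReal_sin, ← Complex.ofReal_pow, Complex.ofReal_re, mul_sum, Complex.re_sum] at hC
  rw [hC]
  refine sum_congr rfl fun r _ => ?_
  rw [← Complex.exp_ofReal_mul_I_re, ← Complex.re_ofReal_mul]
  congr 1
  push_cast
  rw [add_mul, Complex.exp_add, hrot, div_pow]
  linear_combination -(-1) ^ r * (n.choose r : ℂ) * Complex.I ^ n / 2 ^ n *
    Complex.exp ((2 * r - n) * x * Complex.I) * hsign

theorem Real.hasDerivAt_cos_const_add_mul (a b x : ℝ) :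
    HasDerivAt (fun x => cos (a + b * x)) (b * cos (a + π / 2 + b * x)) x := by
  have h := (((hasDerivAt_id x).const_mul b).const_add a).cos
  rw [add_right_comm, cos_add_pi_div_two]
  simpa [mul_comm] using h

theorem Real.iteratedDeriv_sum_mul_cos {ι : Type*} (s : Finset ι) (c a b : ι → ℝ) (k : ℕ) :
    iteratedDeriv k (fun x => ∑ i ∈ s, c i * cos (a i + b i * x)) =
      fun x => ∑ i ∈ s, c i * b i ^ k * cos (a i + k * (π / 2) + b i * x) := by
  induction k with
  | zero => simp
  | succ k ih =>
    rw [iteratedDeriv_succ, ih]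
    ext x
    refine (HasDerivAt.fun_sum fun i _ => ((hasDerivAt_cos_const_add_mul _ (b i) x).const_mul
      (c i * b i ^ k))).deriv.trans (sum_congr rfl fun i _ => ?_)
    push_cast
    ring_nf

theorem iteratedDeriv_real_sin_pow (k n : ℕ) (x : ℝ) :
    iteratedDeriv k (fun t : ℝ => Real.sin t ^ n) x =
      ((-1 : ℝ) ^ n / 2 ^ n) *
        ∑ r ∈ Finset.range (n + 1),
          (-1 : ℝ) ^ r * (n.choose r : ℝ) * (2 * (r : ℝ) - (n : ℝ)) ^ k *
            Real.cos (((k : ℝ) - (n : ℝ)) * (Real.pi / 2) + (2 * (r : ℝ) - (n : ℝ)) * x) := by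
  simp_rw [sin_pow_eq_sum_cos n, iteratedDeriv_sum_mul_cos, mul_sum]
  refine sum_congr rfl fun r _ => ?_
  ring_nf
end

section
/- Let n be an integer and let f_k(n) be the polynomials defined by the recursion f_0(n) = 1 and f_{k+1}(n)(u) = (n − k)·u·f_k(n)(u) + (u² − 1)·d/du[f_k(n)(u)]. Then for every natural number k and every complex number x with sin x ≠ 0, the k-th derivative of the function z ↦ (sin z)^n (integer power), evaluated at x, equals (sin x)^(n−k) · f_k(n)(cos x). -/
open Polynomial

/-- The polynomials `f_k(n)` with `f_0(n) = 1` and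
`f_{k+1}(n)(u) = (n - k)·u·f_k(n)(u) + (u² - 1)·d/du[f_k(n)(u)]`. -/
noncomputable def fPoly (n : ℤ) : ℕ → Polynomial ℂ
  | 0 => 1
  | k + 1 =>
      Polynomial.C ((n : ℂ) - (k : ℂ)) * Polynomial.X * fPoly n k +
        (Polynomial.X ^ 2 - 1) * Polynomial.derivative (fPoly n k)

/-! Induction on `k`. Since `cos' = -sin` and `-sin² = cos² - 1`, the derivative of
`sin z ^ m * p (cos z)` is `sin z ^ (m - 1) * q (cos z)` with `q = m X p + (X² - 1) p'`, which is
the recursion defining `fPoly`. The formula only holds where `sin ≠ 0`; that set is open, so the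
inductive hypothesis may be differentiated there. -/

open Complex in
theorem hasDerivAt_sin_zpow_mul_eval_cos (m : ℤ) (p : ℂ[X]) {x : ℂ} (hx : sin x ≠ 0) :
    HasDerivAt (fun z => sin z ^ m * p.eval (cos z))
      (sin x ^ (m - 1) * (C (m : ℂ) * X * p + (X ^ 2 - 1) * derivative p).eval (cos x)) x := by
  have hsin := (hasDerivAt_zpow m (sin x) (Or.inl hx)).comp x (hasDerivAt_sin x)
  have hcos := (p.hasDerivAt (cos x)).comp x (hasDerivAt_cos x)
  have hpow : sin x ^ m = sin x ^ (m - 1) * sin x := by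
    rw [← zpow_add_one₀ hx, sub_add_cancel]
  refine (hsin.mul hcos).congr_deriv ?_
  simp only [Function.comp_apply, eval_add, eval_mul, eval_C, eval_X, eval_sub, eval_pow,
    eval_one, hpow]
  linear_combination -(sin x ^ (m - 1) * (derivative p).eval (cos x)) * sin_sq_add_cos_sq x

theorem isOpen_setOf_sin_ne_zero : IsOpen {z : ℂ | Complex.sin z ≠ 0} :=
  isOpen_ne_fun Complex.continuous_sin continuous_const

theorem iteratedDeriv_sin_zpow_eq_fPoly (n : ℤ) (k : ℕ) (x : ℂ)
    (hx : Complex.sin x ≠ 0) :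
    iteratedDeriv k (fun z : ℂ => Complex.sin z ^ n) x =
      Complex.sin x ^ (n - (k : ℤ)) * (fPoly n k).eval (Complex.cos x) := by
  induction k generalizing x with
  | zero => simp [fPoly]
  | succ k ih =>
    have hlocal : iteratedDeriv k (fun z : ℂ => Complex.sin z ^ n) =ᶠ[nhds x]
        fun z => Complex.sin z ^ (n - (k : ℤ)) * (fPoly n k).eval (Complex.cos z) := by
      filter_upwards [isOpen_setOf_sin_ne_zero.mem_nhds hx] with z hz using ih z hz
    rw [iteratedDeriv_succ, hlocal.deriv_eq,
      (hasDerivAt_sin_zpow_mul_eval_cos (n - k) (fPoly n k) hx).deriv, fPoly]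
    push_cast
    ring_nf
end

section
/- Let n be an integer and let f_k(n) be the polynomials defined by the recursion f_0(n) = 1 and f_{k+1}(n)(u) = (n − k)·u·f_k(n)(u) + (u² − 1)·d/du[f_k(n)(u)]. Then for every natural number k and every complex number x with sinh x ≠ 0, the k-th derivative of the function z ↦ (sinh z)^n (integer power), evaluated at x, equals (sinh x)^(n−k) · f_k(n)(cosh x). -/
open Polynomial

open Complex Filter Topology

/-- The factor `sinh x` produced by `cosh' = sinh` is rewritten as `(cosh² x - 1) / sinh x`,
so the derivative keeps the shape `sinh ^ (m - 1) * (polynomial in cosh)`. -/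
theorem hasDerivAt_sinh_zpow_mul_eval_cosh (m : ℤ) (p : ℂ[X]) {x : ℂ} (hx : sinh x ≠ 0) :
    HasDerivAt (fun z => sinh z ^ m * p.eval (cosh z))
      (sinh x ^ (m - 1) * (C (m : ℂ) * X * p + (X ^ 2 - 1) * derivative p).eval (cosh x)) x := by
  have hpow : HasDerivAt (fun z => sinh z ^ m) (m * sinh x ^ (m - 1) * cosh x) x :=
    (hasDerivAt_zpow m (sinh x) (Or.inl hx)).comp x (hasDerivAt_sinh x)
  have heval : HasDerivAt (fun z => p.eval (cosh z)) ((derivative p).eval (cosh x) * sinh x) x :=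
    (p.hasDerivAt (cosh x)).comp x (hasDerivAt_cosh x)
  have hsplit : sinh x ^ m = sinh x ^ (m - 1) * sinh x := by
    rw [← zpow_add_one₀ hx, sub_add_cancel]
  refine (hpow.mul heval).congr_deriv ?_
  simp only [eval_add, eval_mul, eval_C, eval_X, eval_sub, eval_pow, eval_one, cosh_sq,
    add_sub_cancel_right, hsplit]
  ring

theorem fPoly_succ (n : ℤ) (k : ℕ) :
    fPoly n (k + 1) =
      C ((n - k : ℤ) : ℂ) * X * fPoly n k + (X ^ 2 - 1) * derivative (fPoly n k) := by
  rw [fPoly, Int.cast_sub, Int.cast_natCast]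

theorem iteratedDeriv_sinh_zpow_eq_fPoly (n : ℤ) (k : ℕ) (x : ℂ)
    (hx : Complex.sinh x ≠ 0) :
    iteratedDeriv k (fun z : ℂ => Complex.sinh z ^ n) x =
      Complex.sinh x ^ (n - (k : ℤ)) * (fPoly n k).eval (Complex.cosh x) := by
  induction k generalizing x with
  | zero => simp [fPoly]
  | succ k ih =>
    have hderiv_k : iteratedDeriv k (fun z => sinh z ^ n) =ᶠ[𝓝 x]
        fun z => sinh z ^ (n - k) * (fPoly n k).eval (cosh z) :=
      (continuous_sinh.continuousAt.eventually_ne hx).mono ih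
    rw [iteratedDeriv_succ, hderiv_k.deriv_eq,
      (hasDerivAt_sinh_zpow_mul_eval_cosh (n - k) (fPoly n k) hx).deriv, fPoly_succ,
      Nat.cast_succ, sub_add_eq_sub_sub]
end

section
/- For every natural number k and every integer n, the polynomial f_k(n) has degree at most k in u, and the coefficient of u^k in f_k(n) equals n^k; in particular, as a polynomial in n, this leading coefficient is monic of degree k. -/
open Polynomial

lemma fPoly_coeff_key (n : ℤ) (k : ℕ) :
    (∀ j, k < j → (fPoly n k).coeff j = 0) ∧ (fPoly n k).coeff k = (n : ℂ) ^ k := by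
  induction k with
  | zero =>
    refine ⟨fun j hj => ?_, by simp [fPoly]⟩
    rw [show (fPoly n 0) = 1 from rfl, coeff_one, if_neg (by omega)]
  | succ k ih =>
    obtain ⟨h0, hk⟩ := ih
    have hcoeff : ∀ m : ℕ, (fPoly n (k + 1)).coeff (m + 2) =
        ((n : ℂ) - (k : ℂ)) * (fPoly n k).coeff (m + 1)
        + ((fPoly n k).coeff (m + 1) * (m + 1)
          - (fPoly n k).coeff (m + 3) * (m + 3)) := by
      intro m
      have h3 : ((X ^ 2 - 1 : Polynomial ℂ) * derivative (fPoly n k)) =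
          X ^ 2 * derivative (fPoly n k) - derivative (fPoly n k) := by ring
      rw [fPoly, h3, coeff_add, coeff_sub, mul_assoc, coeff_C_mul]
      have h1 : (X * fPoly n k).coeff (m + 1 + 1) = (fPoly n k).coeff (m + 1) :=
        coeff_X_mul _ _
      have h2 : (X ^ 2 * derivative (fPoly n k)).coeff (m + 2) =
          (derivative (fPoly n k)).coeff m := coeff_X_pow_mul _ _ _
      rw [show m + 2 = m + 1 + 1 from rfl] at h2 ⊢
      rw [h1, h2, coeff_derivative, coeff_derivative]
      push_cast
      ring_nf
    constructor
    · intro j hj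
      obtain ⟨m, rfl⟩ : ∃ m, j = m + 2 := ⟨j - 2, by omega⟩
      rw [hcoeff, h0 (m + 1) (by omega), h0 (m + 3) (by omega)]
      ring
    · cases k with
      | zero => simp [fPoly]
      | succ k' =>
        rw [show k' + 1 + 1 = k' + 2 from rfl, hcoeff k']
        rw [show k' + 1 + 2 = k' + 1 + 1 + 1 from rfl] at *
        rw [hk, h0 (k' + 1 + 1 + 1) (by omega)]
        push_cast
        ring

theorem fPoly_degree_le_and_leading_coeff (k : ℕ) (n : ℤ) :
    (fPoly n k).degree ≤ (k : ℕ) ∧ (fPoly n k).coeff k = (n : ℂ) ^ k := by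
  obtain ⟨h0, hk⟩ := fPoly_coeff_key n k
  refine ⟨?_, hk⟩
  rw [degree_le_iff_coeff_zero]
  intro m hm
  exact h0 m (by exact_mod_cast hm)
end

section
/- For every even natural number k and every integer n there exists a polynomial P of degree at most k such that for every complex number x with sinh x ≠ 0, the k-th derivative of z ↦ (sinh z)^n (integer power) at x equals (sinh x)^(n−k) · P(sinh x); and for every odd natural number k and every integer n there exists a polynomial P of degree at most k − 1 such that for every complex number x with sinh x ≠ 0, the k-th derivative of z ↦ (sinh z)^n at x equals (sinh x)^(n−k) · cosh x · P(sinh x). The analogous statement holds for cosh: for k even there is a polynomial P of degree at most k with k-th derivative of z ↦ (cosh z)^n at x equal to (cosh x)^(n−k) · P(cosh x) whenever cosh x ≠ 0, and for k odd a polynomial P of degree at most k − 1 with the k-th derivative equal to (cosh x)^(n−k) · sinh x · P(cosh x). -/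
/-!
Both `(f, g) = (sinh, cosh)` and `(f, g) = (cosh, sinh)` satisfy `f' = g`, `g' = f` and
`g ^ 2 = ε + f ^ 2` with `ε = ±1`. Hence the derivative of `f ^ m * P(f)` is `f ^ (m - 1) * g * Q(f)`
with `deg Q ≤ deg P`, and, after replacing `g ^ 2` by `ε + f ^ 2`, the derivative of
`f ^ m * g * P(f)` is `f ^ (m - 1) * R(f)` with `deg R ≤ deg P + 2`. Starting from `f ^ n`, the
successive derivatives alternate between these two shapes.
-/

open Polynomial

namespace Polynomial

variable {R : Type*} [Semiring R]

/-- `X ^ (1 - m) * d/dX (X ^ m * P)`, the polynomial that differentiation of `y ^ m * P(y)`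
produces in front of `y ^ (m - 1)`. -/
noncomputable def twistedDerivative (m : R) (P : R[X]) : R[X] :=
  C m * P + X * derivative P

theorem coeff_twistedDerivative (m : R) (P : R[X]) (i : ℕ) :
    (twistedDerivative m P).coeff i = (m + i) * P.coeff i := by
  rcases i with _ | i
  · simp [twistedDerivative]
  · simp only [twistedDerivative, coeff_add, coeff_C_mul, coeff_X_mul, coeff_derivative]
    rw [add_mul, Nat.cast_comm, Nat.cast_succ]

theorem degree_twistedDerivative_le (m : R) (P : R[X]) :
    (twistedDerivative m P).degree ≤ P.degree :=
  (degree_le_iff_coeff_zero _ _).2 fun i hi => by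
    rw [coeff_twistedDerivative, coeff_eq_zero_of_degree_lt hi, mul_zero]

end Polynomial

section HyperbolicPair

variable {𝕜 : Type*} [NontriviallyNormedField 𝕜] {f g : 𝕜 → 𝕜} {ε x : 𝕜}

theorem HasDerivAt.zpow_mul_eval_comp (hf : HasDerivAt f (g x) x) (hx : f x ≠ 0) (m : ℤ)
    (P : 𝕜[X]) :
    HasDerivAt (fun y => f y ^ m * P.eval (f y))
      (f x ^ (m - 1) * g x * (twistedDerivative (m : 𝕜) P).eval (f x)) x := by
  have hpow := (hasDerivAt_zpow m (f x) (Or.inl hx)).comp x hf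
  have hP := (P.hasDerivAt (f x)).comp x hf
  refine (hpow.mul hP).congr_deriv ?_
  have hsplit : f x ^ m = f x ^ (m - 1) * f x := by rw [← zpow_add_one₀ hx, sub_add_cancel]
  simp only [twistedDerivative, eval_add, eval_mul, eval_C, eval_X, Function.comp_apply, hsplit]
  ring

theorem HasDerivAt.zpow_mul_mul_eval_comp (hf : HasDerivAt f (g x) x) (hg : HasDerivAt g (f x) x)
    (hfg : g x ^ 2 = ε + f x ^ 2) (hx : f x ≠ 0) (m : ℤ) (P : 𝕜[X]) :
    HasDerivAt (fun y => f y ^ m * g y * P.eval (f y))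
      (f x ^ (m - 1) * ((C ε + X ^ 2) * twistedDerivative (m : 𝕜) P + X ^ 2 * P).eval (f x)) x := by
  have hpow := (hasDerivAt_zpow m (f x) (Or.inl hx)).comp x hf
  have hP := (P.hasDerivAt (f x)).comp x hf
  refine ((hpow.mul hg).mul hP).congr_deriv ?_
  have hsplit : f x ^ m = f x ^ (m - 1) * f x := by rw [← zpow_add_one₀ hx, sub_add_cancel]
  simp only [twistedDerivative, eval_add, eval_mul, eval_C, eval_pow, eval_X, Pi.mul_apply,
    Function.comp_apply, hsplit]
  linear_combination (f x ^ (m - 1) * ((m : 𝕜) * P.eval (f x) + f x * (derivative P).eval (f x))) * hfg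

theorem exists_poly_iteratedDeriv_zpow (hf : ∀ x, HasDerivAt f (g x) x)
    (hg : ∀ x, HasDerivAt g (f x) x) (hfg : ∀ x, g x ^ 2 = ε + f x ^ 2) (k : ℕ) (n : ℤ) :
    (Even k → ∃ P : 𝕜[X], P.degree ≤ (k : ℕ) ∧ ∀ x, f x ≠ 0 →
        iteratedDeriv k (fun z => f z ^ n) x = f x ^ (n - k) * P.eval (f x)) ∧
    (Odd k → ∃ P : 𝕜[X], P.degree ≤ (k - 1 : ℕ) ∧ ∀ x, f x ≠ 0 →
        iteratedDeriv k (fun z => f z ^ n) x = f x ^ (n - k) * g x * P.eval (f x)) := by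
  induction k with
  | zero => exact ⟨fun _ => ⟨1, by simp, fun x _ => by simp⟩, fun h => absurd h Nat.not_odd_zero⟩
  | succ k ih =>
    have hexp : n - ((k + 1 : ℕ) : ℤ) = n - k - 1 := by push_cast; ring
    refine ⟨fun hk => ?_, fun hk => ?_⟩
    · have hk' : Odd k := Nat.not_even_iff_odd.mp (Nat.even_add_one.mp hk)
      obtain ⟨P, hPdeg, hP⟩ := ih.2 hk'
      refine ⟨(C ε + X ^ 2) * twistedDerivative ((n - k : ℤ) : 𝕜) P + X ^ 2 * P, ?_, fun x hx => ?_⟩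
      · have hdeg : ((k + 1 : ℕ) : WithBot ℕ) = 2 + ((k - 1 : ℕ) : WithBot ℕ) := by
          norm_cast; have := hk'.pos; omega
        rw [hdeg, ← max_self (2 + _)]
        exact degree_add_le_of_le
          (degree_mul_le_of_le (by compute_degree) ((degree_twistedDerivative_le _ _).trans hPdeg))
          (degree_mul_le_of_le (degree_X_pow_le 2) hPdeg)
      · rw [iteratedDeriv_succ, hexp]
        exact ((hf x).zpow_mul_mul_eval_comp (hg x) (hfg x) hx _ P |>.congr_of_eventuallyEq
          (((hf x).continuousAt.eventually_ne hx).mono hP)).deriv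
    · have hk' : Even k := Nat.not_odd_iff_even.mp (Nat.odd_add_one.mp hk)
      obtain ⟨P, hPdeg, hP⟩ := ih.1 hk'
      refine ⟨twistedDerivative ((n - k : ℤ) : 𝕜) P, ?_, fun x hx => ?_⟩
      · exact (degree_twistedDerivative_le _ _).trans (by simpa using hPdeg)
      · rw [iteratedDeriv_succ, hexp]
        exact ((hf x).zpow_mul_eval_comp hx _ P |>.congr_of_eventuallyEq
          (((hf x).continuousAt.eventually_ne hx).mono hP)).deriv

end HyperbolicPair

theorem iteratedDeriv_sinh_cosh_zpow_exists_poly (k : ℕ) (n : ℤ) :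
    (Even k → ∃ P : Polynomial ℂ, P.degree ≤ (k : ℕ) ∧
      ∀ x : ℂ, Complex.sinh x ≠ 0 →
        iteratedDeriv k (fun z : ℂ => Complex.sinh z ^ n) x =
          Complex.sinh x ^ (n - (k : ℤ)) * P.eval (Complex.sinh x)) ∧
    (Odd k → ∃ P : Polynomial ℂ, P.degree ≤ (k - 1 : ℕ) ∧
      ∀ x : ℂ, Complex.sinh x ≠ 0 →
        iteratedDeriv k (fun z : ℂ => Complex.sinh z ^ n) x =
          Complex.sinh x ^ (n - (k : ℤ)) * Complex.cosh x * P.eval (Complex.sinh x)) ∧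
    (Even k → ∃ P : Polynomial ℂ, P.degree ≤ (k : ℕ) ∧
      ∀ x : ℂ, Complex.cosh x ≠ 0 →
        iteratedDeriv k (fun z : ℂ => Complex.cosh z ^ n) x =
          Complex.cosh x ^ (n - (k : ℤ)) * P.eval (Complex.cosh x)) ∧
    (Odd k → ∃ P : Polynomial ℂ, P.degree ≤ (k - 1 : ℕ) ∧
      ∀ x : ℂ, Complex.cosh x ≠ 0 →
        iteratedDeriv k (fun z : ℂ => Complex.cosh z ^ n) x =
          Complex.cosh x ^ (n - (k : ℤ)) * Complex.sinh x * P.eval (Complex.cosh x)) := by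
  have hsinh := exists_poly_iteratedDeriv_zpow (ε := 1) Complex.hasDerivAt_sinh
    Complex.hasDerivAt_cosh (fun x => by rw [Complex.cosh_sq, add_comm]) k n
  have hcosh := exists_poly_iteratedDeriv_zpow (ε := -1) Complex.hasDerivAt_cosh
    Complex.hasDerivAt_sinh (fun x => by rw [Complex.sinh_sq]; ring) k n
  exact ⟨hsinh.1, hsinh.2, hcosh.1, hcosh.2⟩
end
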